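/- For μ > 0 fixed, the function τ ↦ (1 - e^{-μτ})/(μτ) is strictly convex on (0, ∞). -/

import Mathlib

/-!
Substituting `x = μ τ`, the function is `h(x) = (1 - e^{-x}) / x` precomposed with an injective
linear map, so it suffices that `h'' > 0` on `(0, ∞)`. Here
`h''(x) = (2 - (x² + 2x + 2) e^{-x}) / x³`, whose numerator is positive because `e^x` exceeds
its cubic Taylor polynomial.
-/

open Real Set

theorem StrictConvexOn.comp_linearMap {𝕜 E F β : Type*} [Semiring 𝕜] [PartialOrder 𝕜]
    [AddCommMonoid E] [AddCommMonoid F] [AddCommMonoid β] [PartialOrder β]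
    [Module 𝕜 E] [Module 𝕜 F] [SMul 𝕜 β] {f : F → β} {s : Set F}
    (hf : StrictConvexOn 𝕜 s f) (g : E →ₗ[𝕜] F) (hg : Function.Injective g) :
    StrictConvexOn 𝕜 (g ⁻¹' s) (f ∘ g) :=
  ⟨hf.1.linear_preimage g, fun x hx y hy hxy a b ha hb hab =>
    calc
      f (g (a • x + b • y)) = f (a • g x + b • g y) := by rw [map_add, map_smul, map_smul]
      _ < a • f (g x) + b • f (g y) := hf.2 hx hy (hg.ne hxy) ha hb hab⟩

theorem Real.quadratic_lt_two_mul_exp {x : ℝ} (hx : 0 < x) : x ^ 2 + 2 * x + 2 < 2 * exp x := by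
  have h := sum_le_exp_of_nonneg hx.le 4
  simp only [Finset.sum_range_succ, Finset.sum_range_zero, Nat.factorial] at h
  norm_num at h
  nlinarith [pow_pos hx 3]

theorem Real.hasDerivAt_one_sub_exp_neg_div {x : ℝ} (hx : x ≠ 0) :
    HasDerivAt (fun t => (1 - exp (-t)) / t) (((x + 1) * exp (-x) - 1) / x ^ 2) x := by
  refine ((((hasDerivAt_neg x).exp).const_sub 1).fun_div (hasDerivAt_id' x) hx).congr_deriv ?_
  ring

theorem Real.hasDerivAt_add_one_mul_exp_neg_sub_one_div_sq {x : ℝ} (hx : x ≠ 0) :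
    HasDerivAt (fun t => ((t + 1) * exp (-t) - 1) / t ^ 2)
      ((2 - (x ^ 2 + 2 * x + 2) * exp (-x)) / x ^ 3) x := by
  refine ((((hasDerivAt_id' x).add_const 1).fun_mul (hasDerivAt_neg x).exp).sub_const 1).fun_div
    (hasDerivAt_pow 2 x) (pow_ne_zero 2 hx) |>.congr_deriv ?_
  field_simp
  ring

theorem Real.strictConvexOn_one_sub_exp_neg_div :
    StrictConvexOn ℝ (Ioi 0) (fun x => (1 - exp (-x)) / x) := by
  refine strictConvexOn_of_deriv2_pos (convex_Ioi 0)
    (ContinuousOn.div (by fun_prop) (by fun_prop) fun x hx => ne_of_gt hx) fun x hx => ?_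
  rw [interior_Ioi] at hx
  have hx0 : (0 : ℝ) < x := hx
  have hderiv : deriv (fun t => (1 - exp (-t)) / t) =ᶠ[nhds x]
      fun t => ((t + 1) * exp (-t) - 1) / t ^ 2 :=
    Filter.eventually_of_mem (isOpen_Ioi.mem_nhds hx) fun t ht =>
      (hasDerivAt_one_sub_exp_neg_div (ne_of_gt ht)).deriv
  rw [Function.iterate_succ_apply, Function.iterate_one, hderiv.deriv_eq,
    (hasDerivAt_add_one_mul_exp_neg_sub_one_div_sq hx0.ne').deriv]
  have hnum : (x ^ 2 + 2 * x + 2) * exp (-x) < 2 := by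
    rw [exp_neg, ← div_eq_mul_inv, div_lt_iff₀ (exp_pos x)]
    exact quadratic_lt_two_mul_exp hx0
  exact div_pos (by linarith) (by positivity)

/-- For fixed `μ > 0`, the function `τ ↦ (1 - exp (-μ τ))/(μ τ)` is strictly convex
on `(0, ∞)`. -/
theorem confirm_prob_strictConvex (μ : ℝ) (hμ : 0 < μ) :
    StrictConvexOn ℝ (Set.Ioi (0:ℝ))
      (fun τ : ℝ => (1 - Real.exp (-(μ * τ))) / (μ * τ)) :=
  (strictConvexOn_one_sub_exp_neg_div.comp_linearMap (LinearMap.mulLeft ℝ μ)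
    (mul_right_injective₀ hμ.ne')).subset (fun _ hτ => mul_pos hμ hτ) (convex_Ioi 0)
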